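/- Let (A,·,α) be a regular finite-dimensional Hom-pre-Lie algebra and r ∈ A⊗A symmetric (σ(r) = r). Then r satisfies r^♯∘(α^{-1})* = α∘r^♯ and [[r,r]] = 0 if and only if the linear map r^♯∘(α^{-1})*: A* → A is a Hom-O-operator associated to the representation (A*, (α^{-1})*, ad^⋆, −R^⋆) of (A,·,α). -/

import Mathlib

open TensorProduct LinearMap Module

section Defs

variable {K : Type*} [Field K]

section Basic
variable {A : Type*} [AddCommGroup A] [Module K A]
variable {B : Type*} [AddCommGroup B] [Module K B]
variable {V : Type*} [AddCommGroup V] [Module K V]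

/-- A Hom-pre-Lie algebra structure. -/
def IsHomPreLie (m : A →ₗ[K] A →ₗ[K] A) (α : A →ₗ[K] A) : Prop :=
  (∀ x y, α (m x y) = m (α x) (α y)) ∧
  ∀ x y z, m (m x y) (α z) - m (α x) (m y z) = m (m y x) (α z) - m (α y) (m x z)

/-- A Hom-Lie algebra structure. -/
def IsHomLie (br : A →ₗ[K] A →ₗ[K] A) (φ : A →ₗ[K] A) : Prop :=
  (∀ x y, br x y = - br y x) ∧
  (∀ x y, φ (br x y) = br (φ x) (φ y)) ∧
  ∀ x y z, br (φ x) (br y z) + br (φ y) (br z x) + br (φ z) (br x y) = 0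

/-- A representation of a Hom-Lie algebra on `V` with respect to `β`. -/
def IsHomLieRep (br : A →ₗ[K] A →ₗ[K] A) (φ : A →ₗ[K] A)
    (β : Module.End K V) (ρ : A →ₗ[K] Module.End K V) : Prop :=
  (∀ x, ρ (φ x) * β = β * ρ x) ∧
  ∀ x y, ρ (br x y) * β = ρ (φ x) * ρ y - ρ (φ y) * ρ x

/-- A representation of a Hom-pre-Lie algebra on `V` with respect to `β`. -/
def IsHomPreLieRep (m : A →ₗ[K] A →ₗ[K] A) (α : A →ₗ[K] A)
    (β : Module.End K V) (ρ μ : A →ₗ[K] Module.End K V) : Prop :=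
  IsHomLieRep (m - m.flip) α β ρ ∧
  (∀ x, β * μ x = μ (α x) * β) ∧
  ∀ x y, μ (α y) * μ x - μ (m x y) * β = μ (α y) * ρ x - ρ (α x) * μ y

/-- A 1-cocycle of a Hom-Lie algebra with respect to a representation. -/
def IsHomLieCocycle (br : A →ₗ[K] A →ₗ[K] A) (φ : A →ₗ[K] A)
    (ρ : A →ₗ[K] Module.End K V) (δ : A →ₗ[K] V) : Prop :=
  ∀ x y, δ (br x y) = ρ (φ x) (δ y) - ρ (φ y) (δ x)

/-- A matched pair of Hom-Lie algebras. -/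
def IsHomLieMatchedPair (brA : A →ₗ[K] A →ₗ[K] A) (φA : A →ₗ[K] A)
    (brB : B →ₗ[K] B →ₗ[K] B) (φB : B →ₗ[K] B)
    (ρ : A →ₗ[K] Module.End K B) (ρ' : B →ₗ[K] Module.End K A) : Prop :=
  IsHomLie brA φA ∧ IsHomLie brB φB ∧
  IsHomLieRep brA φA φB ρ ∧ IsHomLieRep brB φB φA ρ' ∧
  (∀ x y x', ρ' (φB x') (brA x y) =
    brA (ρ' x' x) (φA y) + brA (φA x) (ρ' x' y) + ρ' (ρ y x') (φA x) - ρ' (ρ x x') (φA y)) ∧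
  ∀ x x' y', ρ (φA x) (brB x' y') =
    brB (ρ x x') (φB y') + brB (φB x') (ρ x y') + ρ (ρ' y' x) (φB x') - ρ (ρ' x' x) (φB y')

/-- A matched pair of Hom-pre-Lie algebras. -/
def IsHomPreLieMatchedPair (mA : A →ₗ[K] A →ₗ[K] A) (αA : A →ₗ[K] A)
    (mB : B →ₗ[K] B →ₗ[K] B) (αB : B →ₗ[K] B)
    (lA rA : A →ₗ[K] Module.End K B) (lB rB : B →ₗ[K] Module.End K A) : Prop :=
  IsHomPreLie mA αA ∧ IsHomPreLie mB αB ∧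
  IsHomPreLieRep mA αA αB lA rA ∧ IsHomPreLieRep mB αB αA lB rB ∧
  (∀ (x : A) (a b : B), rA (αA x) (mB a b - mB b a) =
    rA (lB b x) (αB a) - rA (lB a x) (αB b) + mB (αB a) (rA x b) - mB (αB b) (rA x a)) ∧
  (∀ (x : A) (a b : B), lA (αA x) (mB a b) =
    -(lA (lB a x - rB a x) (αB b)) + mB (lA x a - rA x a) (αB b)
      + rA (rB b x) (αB a) + mB (αB a) (lA x b)) ∧
  (∀ (a : B) (x y : A), rB (αB a) (mA x y - mA y x) =
    rB (lA y a) (αA x) - rB (lA x a) (αA y) + mA (αA x) (rB a y) - mA (αA y) (rB a x)) ∧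
  ∀ (a : B) (x y : A), lB (αB a) (mA x y) =
    -(lB (lA x a - rA x a) (αA y)) + mA (lB a x - rB a x) (αA y)
      + rB (rA y a) (αA x) + mA (αA x) (lB a y)

/-- A Hom-L-dendriform algebra structure. -/
def IsHomLDendriform (tr tl : A →ₗ[K] A →ₗ[K] A) (α : A →ₗ[K] A) : Prop :=
  (∀ x y, α (tr x y) = tr (α x) (α y)) ∧
  (∀ x y, α (tl x y) = tl (α x) (α y)) ∧
  (∀ x y z, tr (tr x y) (α z) + tr (tl x y) (α z) + tr (α y) (tr x z)
      - tr (tl y x) (α z) - tr (tr y x) (α z) - tr (α x) (tr y z) = 0) ∧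
  ∀ x y z, tl (tr x y) (α z) + tl (α y) (tr x z) + tl (α y) (tl x z)
      - tl (tl y x) (α z) - tr (α x) (tl y z) = 0

/-- A Hom-O-operator on a Hom-pre-Lie algebra with respect to a representation. -/
def IsHomOOperator (m : A →ₗ[K] A →ₗ[K] A) (α : A →ₗ[K] A)
    (β : V ≃ₗ[K] V) (ρ μ : A →ₗ[K] Module.End K V) (T : V →ₗ[K] A) : Prop :=
  (∀ v, T (β v) = α (T v)) ∧
  ∀ u v, m (T u) (T v) = T (ρ (T (β.symm u)) v + μ (T (β.symm v)) u)

/-- A quadratic Hom-pre-Lie algebra. -/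
def IsQuadraticHomPreLie (m : A →ₗ[K] A →ₗ[K] A) (α : A →ₗ[K] A)
    (ω : A →ₗ[K] A →ₗ[K] K) : Prop :=
  IsHomPreLie m α ∧
  (∀ x y, ω x y = - ω y x) ∧
  (∀ x, (∀ y, ω x y = 0) → x = 0) ∧
  (∀ x y, ω (α x) (α y) = ω x y) ∧
  ∀ x y z, ω (m x y) (α z) = - ω (α y) (m x z - m z x)

/-- A Manin triple for Hom-pre-Lie algebras. -/
def IsManinTriple (m : A →ₗ[K] A →ₗ[K] A) (α : A →ₗ[K] A)
    (ω : A →ₗ[K] A →ₗ[K] K) (A1 A2 : Submodule K A) : Prop :=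
  IsQuadraticHomPreLie m α ω ∧
  (∀ x ∈ A1, ∀ y ∈ A1, m x y ∈ A1) ∧ (∀ x ∈ A1, α x ∈ A1) ∧
  (∀ x ∈ A2, ∀ y ∈ A2, m x y ∈ A2) ∧ (∀ x ∈ A2, α x ∈ A2) ∧
  (∀ x ∈ A1, ∀ y ∈ A1, ω x y = 0) ∧ (∀ x ∈ A2, ∀ y ∈ A2, ω x y = 0) ∧
  IsCompl A1 A2

/-- A Hessian structure on a Hom-pre-Lie algebra. -/
def IsHessian (m : A →ₗ[K] A →ₗ[K] A) (α : A →ₗ[K] A) (Bf : A →ₗ[K] A →ₗ[K] K) : Prop :=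
  (∀ x y, Bf x y = Bf y x) ∧ (∀ x, (∀ y, Bf x y = 0) → x = 0) ∧
  (∀ x y, Bf (α x) (α y) = Bf x y) ∧
  ∀ x y z, Bf (m x y) (α z) - Bf (α x) (m y z) = Bf (m y x) (α z) - Bf (α y) (m x z)

end Basic

section Transpose
variable {X Y : Type*} [AddCommGroup X] [Module K X] [AddCommGroup Y] [Module K Y]

/-- The transpose of linear maps, as a bundled linear map. -/
noncomputable def transposeH : (X →ₗ[K] Y) →ₗ[K] (Y →ₗ[K] K) →ₗ[K] (X →ₗ[K] K) :=
  (LinearMap.llcomp K X Y K).flip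

@[simp] theorem transposeH_apply (f : X →ₗ[K] Y) (ξ : Y →ₗ[K] K) (x : X) :
    transposeH f ξ x = ξ (f x) := rfl

end Transpose

section StarOps
variable {A : Type*} [AddCommGroup A] [Module K A]

/-- The evaluation map into the double dual. -/
noncomputable def evalH : A →ₗ[K] ((A →ₗ[K] K) →ₗ[K] K) :=
  (LinearMap.id : (A →ₗ[K] K) →ₗ[K] (A →ₗ[K] K)).flip

/-- The operator `L^⋆` : `⟨L^⋆_x ξ, y⟩ = -⟨ξ, α⁻¹(x) · α⁻²(y)⟩`. -/
noncomputable def Lstar (m : A →ₗ[K] A →ₗ[K] A) (α : A ≃ₗ[K] A) :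
    A →ₗ[K] (A →ₗ[K] K) →ₗ[K] (A →ₗ[K] K) :=
  @Neg.neg _ (@LinearMap.instNeg _ _ _ _ _ _ _ (LinearMap.addCommGroup : AddCommGroup ((A →ₗ[K] K) →ₗ[K] (A →ₗ[K] K))) _ _ _) (transposeH ∘ₗ
      (LinearMap.lcomp K A ((α ^ (-2 : ℤ) : A ≃ₗ[K] A) : A →ₗ[K] A)) ∘ₗ m ∘ₗ
      ((α⁻¹ : A ≃ₗ[K] A) : A →ₗ[K] A))

/-- The operator `R^⋆` : `⟨R^⋆_x ξ, y⟩ = -⟨ξ, α⁻²(y) · α⁻¹(x)⟩`. -/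
noncomputable def Rstar (m : A →ₗ[K] A →ₗ[K] A) (α : A ≃ₗ[K] A) :
    A →ₗ[K] (A →ₗ[K] K) →ₗ[K] (A →ₗ[K] K) :=
  @Neg.neg _ (@LinearMap.instNeg _ _ _ _ _ _ _ (LinearMap.addCommGroup : AddCommGroup ((A →ₗ[K] K) →ₗ[K] (A →ₗ[K] K))) _ _ _) (transposeH ∘ₗ
      (LinearMap.lcomp K A ((α ^ (-2 : ℤ) : A ≃ₗ[K] A) : A →ₗ[K] A)) ∘ₗ m.flip ∘ₗ
      ((α⁻¹ : A ≃ₗ[K] A) : A →ₗ[K] A))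

/-- The operator `ad^⋆ = L^⋆ - R^⋆`. -/
noncomputable def adStar (m : A →ₗ[K] A →ₗ[K] A) (α : A ≃ₗ[K] A) :
    A →ₗ[K] (A →ₗ[K] K) →ₗ[K] (A →ₗ[K] K) :=
  @HSub.hSub _ _ _ (@instHSub _ (@LinearMap.instSub _ _ _ _ _ _ _ (LinearMap.addCommGroup : AddCommGroup ((A →ₗ[K] K) →ₗ[K] (A →ₗ[K] K))) _ _ _)) (Lstar m α) (Rstar m α)

variable [FiniteDimensional K A]

/-- The inverse of the double-dual evaluation isomorphism. -/
noncomputable def evalInvH : ((A →ₗ[K] K) →ₗ[K] K) →ₗ[K] A :=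
  (Module.evalEquiv K A).symm.toLinearMap

/-- The operator `ℒ^⋆` : `⟨η, ℒ^⋆_ξ x⟩ = -⟨(α⁻¹)*(ξ) ∘ η, α²(x)⟩`. -/
noncomputable def Lcurly
    (mc : (A →ₗ[K] K) →ₗ[K] (A →ₗ[K] K) →ₗ[K] (A →ₗ[K] K))
    (α : A ≃ₗ[K] A) : (A →ₗ[K] K) →ₗ[K] A →ₗ[K] A :=
  -((LinearMap.llcomp K A ((A →ₗ[K] K) →ₗ[K] K) A evalInvH) ∘ₗ
      (LinearMap.lcomp K ((A →ₗ[K] K) →ₗ[K] K)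
        (evalH ∘ₗ ((α ^ (2 : ℤ) : A ≃ₗ[K] A) : A →ₗ[K] A))) ∘ₗ
      transposeH ∘ₗ mc ∘ₗ
      (transposeH ((α⁻¹ : A ≃ₗ[K] A) : A →ₗ[K] A)))

/-- The operator `ℛ^⋆` : `⟨η, ℛ^⋆_ξ x⟩ = -⟨η ∘ (α⁻¹)*(ξ), α²(x)⟩`. -/
noncomputable def Rcurly
    (mc : (A →ₗ[K] K) →ₗ[K] (A →ₗ[K] K) →ₗ[K] (A →ₗ[K] K))
    (α : A ≃ₗ[K] A) : (A →ₗ[K] K) →ₗ[K] A →ₗ[K] A :=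
  -((LinearMap.llcomp K A ((A →ₗ[K] K) →ₗ[K] K) A evalInvH) ∘ₗ
      (LinearMap.lcomp K ((A →ₗ[K] K) →ₗ[K] K)
        (evalH ∘ₗ ((α ^ (2 : ℤ) : A ≃ₗ[K] A) : A →ₗ[K] A))) ∘ₗ
      transposeH ∘ₗ mc.flip ∘ₗ
      (transposeH ((α⁻¹ : A ≃ₗ[K] A) : A →ₗ[K] A)))

/-- The operator `𝔞𝔡^⋆ = ℒ^⋆ - ℛ^⋆`. -/
noncomputable def adCurly
    (mc : (A →ₗ[K] K) →ₗ[K] (A →ₗ[K] K) →ₗ[K] (A →ₗ[K] K))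
    (α : A ≃ₗ[K] A) : (A →ₗ[K] K) →ₗ[K] A →ₗ[K] A :=
  Lcurly mc α - Rcurly mc α

end StarOps

section Tensor
variable {A : Type*} [AddCommGroup A] [Module K A]

/-- The pairing of `ξ ⊗ η` with elements of `A ⊗ A`. -/
noncomputable def tpair (ξ η : A →ₗ[K] K) : (A ⊗[K] A) →ₗ[K] K :=
  (TensorProduct.lid K K).toLinearMap ∘ₗ TensorProduct.map ξ η

/-- The pairing of `x ⊗ y` with elements of `A* ⊗ A*`. -/
noncomputable def dpair (x y : A) : ((A →ₗ[K] K) ⊗[K] (A →ₗ[K] K)) →ₗ[K] K :=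
  (TensorProduct.lid K K).toLinearMap ∘ₗ TensorProduct.map (evalH x) (evalH y)

/-- Pairing the first two tensor components of `A ⊗ A ⊗ A` with `ξ` and `η`. -/
noncomputable def pair12 (ξ η : A →ₗ[K] K) : (A ⊗[K] (A ⊗[K] A)) →ₗ[K] A :=
  (TensorProduct.lid K A).toLinearMap ∘ₗ
    TensorProduct.map ξ ((TensorProduct.lid K A).toLinearMap ∘ₗ
      TensorProduct.map η LinearMap.id)

/-- The map `r^♯ : A* → A` associated to `r ∈ A ⊗ A`, `⟨r^♯(ξ), η⟩ = ⟨r, ξ ⊗ η⟩`. -/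
noncomputable def rSharpL (r : A ⊗[K] A) : (A →ₗ[K] K) →ₗ[K] A :=
  ((LinearMap.llcomp K (A ⊗[K] A) (K ⊗[K] A) A (TensorProduct.lid K A).toLinearMap) ∘ₗ
    (LinearMap.rTensorHom A)).flip r

/-- The bilinear operation producing `[[r,r]]` out of `r ⊗ r`. -/
noncomputable def homPreLieBB (m : A →ₗ[K] A →ₗ[K] A) (α : A →ₗ[K] A) :
    ((A ⊗[K] A) ⊗[K] (A ⊗[K] A)) →ₗ[K] (A ⊗[K] (A ⊗[K] A)) :=
  (TensorProduct.assoc K A A A).toLinearMap ∘ₗ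
      (TensorProduct.map (TensorProduct.map α α) (TensorProduct.lift m)) ∘ₗ
      (TensorProduct.tensorTensorTensorComm K A A A A).toLinearMap
    - (TensorProduct.map α (TensorProduct.map (TensorProduct.lift (m.flip - m)) α)) ∘ₗ
      (LinearMap.lTensor A ((TensorProduct.assoc K A A A).symm.toLinearMap)) ∘ₗ
      (TensorProduct.assoc K A A (A ⊗[K] A)).toLinearMap
    - (TensorProduct.map (TensorProduct.lift m)
        ((TensorProduct.map α α) ∘ₗ (TensorProduct.comm K A A).toLinearMap)) ∘ₗ
      (TensorProduct.tensorTensorTensorComm K A A A A).toLinearMap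

/-- The element `[[r,r]] ∈ A ⊗ A ⊗ A`. -/
noncomputable def bracket2 (m : A →ₗ[K] A →ₗ[K] A) (α : A →ₗ[K] A) (r : A ⊗[K] A) :
    A ⊗[K] (A ⊗[K] A) :=
  homPreLieBB m α (r ⊗ₜ[K] r)

/-- A Hom-s-matrix in a Hom-pre-Lie algebra. -/
def IsHomSMatrix {B : Type*} [AddCommGroup B] [Module K B]
    (mB : B →ₗ[K] B →ₗ[K] B) (γ : B ≃ₗ[K] B) (r : B ⊗[K] B) : Prop :=
  (TensorProduct.comm K B B) r = r ∧
  (∀ ξ, rSharpL r (ξ ∘ₗ ((γ⁻¹ : B ≃ₗ[K] B) : B →ₗ[K] B)) = γ (rSharpL r ξ)) ∧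
  bracket2 mB (γ : B →ₗ[K] B) r = 0

/-- The representation `x ↦ F(x) ⊗ c + c ⊗ G(x)` on `Y ⊗ Y`. -/
noncomputable def tensorRep {Y : Type*} [AddCommGroup Y] [Module K Y]
    (F G : A →ₗ[K] Y →ₗ[K] Y) (c : Y →ₗ[K] Y) :
    A →ₗ[K] Module.End K (Y ⊗[K] Y) :=
  (LinearMap.mulRight K (LinearMap.lTensor Y c)) ∘ₗ (LinearMap.rTensorHom Y) ∘ₗ F
    + (LinearMap.mulLeft K (LinearMap.rTensor Y c)) ∘ₗ (LinearMap.lTensorHom Y) ∘ₗ G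

/-- The dual map `ρ^⋆` : `⟨ρ^⋆(x)ξ, u⟩ = -⟨(β⁻²)*(ξ), ρ(α(x))u⟩`. -/
noncomputable def rhoStar {V : Type*} [AddCommGroup V] [Module K V]
    (α : A →ₗ[K] A) (β : V ≃ₗ[K] V) (ρ : A →ₗ[K] Module.End K V) :
    A →ₗ[K] (V →ₗ[K] K) →ₗ[K] (V →ₗ[K] K) :=
  @Neg.neg _ (@LinearMap.instNeg _ _ _ _ _ _ _ (LinearMap.addCommGroup : AddCommGroup ((V →ₗ[K] K) →ₗ[K] (V →ₗ[K] K))) _ _ _) (transposeH ∘ₗ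
      (LinearMap.mulLeft K (((β ^ (-2 : ℤ) : V ≃ₗ[K] V) : V →ₗ[K] V) : Module.End K V)) ∘ₗ
      ρ ∘ₗ α)

/-- The semidirect product Hom-pre-Lie product on `A × W`. -/
noncomputable def sdProduct {W : Type*} [AddCommGroup W] [Module K W]
    (m : A →ₗ[K] A →ₗ[K] A) (l r : A →ₗ[K] W →ₗ[K] W) :
    (A × W) →ₗ[K] (A × W) →ₗ[K] (A × W) :=
  (m.compl₁₂ (LinearMap.fst K A W) (LinearMap.fst K A W)).compr₂ (LinearMap.inl K A W)
    + ((l.compl₁₂ (LinearMap.fst K A W) (LinearMap.snd K A W))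
        + (r.compl₁₂ (LinearMap.fst K A W) (LinearMap.snd K A W)).flip).compr₂
      (LinearMap.inr K A W)

end Tensor

section Std
variable (K)
variable (A : Type*) [AddCommGroup A] [Module K A]

/-- The standard bilinear form `ω̄(x+ξ, y+η) = ⟨ξ,y⟩ - ⟨η,x⟩` on `A × A*`. -/
noncomputable def stdOmega :
    (A × (A →ₗ[K] K)) →ₗ[K] (A × (A →ₗ[K] K)) →ₗ[K] K :=
  (LinearMap.id : (A →ₗ[K] K) →ₗ[K] (A →ₗ[K] K)).compl₁₂
      (LinearMap.snd K A (A →ₗ[K] K)) (LinearMap.fst K A (A →ₗ[K] K))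
    - ((LinearMap.id : (A →ₗ[K] K) →ₗ[K] (A →ₗ[K] K)).compl₁₂
      (LinearMap.snd K A (A →ₗ[K] K)) (LinearMap.fst K A (A →ₗ[K] K))).flip

variable {K A}

/-- The standard product `⋄` on `A × A*`:
`(x+ξ) ⋄ (y+η) = x·y + 𝔞𝔡^⋆_ξ y - ℛ^⋆_η x + ξ∘η + ad^⋆_x η - R^⋆_y ξ`. -/
noncomputable def stdDiamond [FiniteDimensional K A]
    (m : A →ₗ[K] A →ₗ[K] A) (α : A ≃ₗ[K] A)
    (mc : (A →ₗ[K] K) →ₗ[K] (A →ₗ[K] K) →ₗ[K] (A →ₗ[K] K)) :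
    (A × (A →ₗ[K] K)) →ₗ[K] (A × (A →ₗ[K] K)) →ₗ[K] (A × (A →ₗ[K] K)) :=
  (m.compl₁₂ (LinearMap.fst K A (A →ₗ[K] K)) (LinearMap.fst K A (A →ₗ[K] K))
      + (adCurly mc α).compl₁₂ (LinearMap.snd K A (A →ₗ[K] K)) (LinearMap.fst K A (A →ₗ[K] K))
      - ((Rcurly mc α).compl₁₂ (LinearMap.snd K A (A →ₗ[K] K))
          (LinearMap.fst K A (A →ₗ[K] K))).flip).compr₂
      (LinearMap.inl K A (A →ₗ[K] K))
    + (@HSub.hSub _ _ _ (@instHSub _ (@LinearMap.instSub _ _ _ _ _ _ _ (LinearMap.addCommGroup : AddCommGroup ((A × (A →ₗ[K] K)) →ₗ[K] (A →ₗ[K] K))) _ _ _))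
        (mc.compl₁₂ (LinearMap.snd K A (A →ₗ[K] K)) (LinearMap.snd K A (A →ₗ[K] K))
      + (adStar m α).compl₁₂ (LinearMap.fst K A (A →ₗ[K] K)) (LinearMap.snd K A (A →ₗ[K] K)))
      (((Rstar m α).compl₁₂ (LinearMap.fst K A (A →ₗ[K] K))
          (LinearMap.snd K A (A →ₗ[K] K))).flip)).compr₂
      (LinearMap.inr K A (A →ₗ[K] K))

end Std

section Bialg
variable {A : Type*} [AddCommGroup A] [Module K A]

/-- A Hom-pre-Lie bialgebra: the two 1-cocycle conditions on the
comultiplications `φ*` and `ψ*`. -/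
def IsHomPreLieBialgebra (m : A →ₗ[K] A →ₗ[K] A) (α : A ≃ₗ[K] A)
    (mc : (A →ₗ[K] K) →ₗ[K] (A →ₗ[K] K) →ₗ[K] (A →ₗ[K] K))
    (φs : A →ₗ[K] A ⊗[K] A)
    (ψs : (A →ₗ[K] K) →ₗ[K] (A →ₗ[K] K) ⊗[K] (A →ₗ[K] K)) : Prop :=
  IsHomLieCocycle (m - m.flip) (α : A →ₗ[K] A)
    (tensorRep (m ∘ₗ ((α ^ (-2 : ℤ) : A ≃ₗ[K] A) : A →ₗ[K] A))
      ((m - m.flip) ∘ₗ ((α ^ (-2 : ℤ) : A ≃ₗ[K] A) : A →ₗ[K] A))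
      (α : A →ₗ[K] A)) φs ∧
  IsHomLieCocycle (@HSub.hSub _ _ _ (@instHSub _ (@LinearMap.instSub _ _ _ _ _ _ _ (LinearMap.addCommGroup : AddCommGroup ((A →ₗ[K] K) →ₗ[K] (A →ₗ[K] K))) _ _ _)) mc mc.flip) (transposeH ((α⁻¹ : A ≃ₗ[K] A) : A →ₗ[K] A))
    (tensorRep (mc ∘ₗ transposeH ((α ^ (2 : ℤ) : A ≃ₗ[K] A) : A →ₗ[K] A))
      ((@HSub.hSub _ _ _ (@instHSub _ (@LinearMap.instSub _ _ _ _ _ _ _ (LinearMap.addCommGroup : AddCommGroup ((A →ₗ[K] K) →ₗ[K] (A →ₗ[K] K))) _ _ _)) mc mc.flip) ∘ₗ transposeH ((α ^ (2 : ℤ) : A ≃ₗ[K] A) : A →ₗ[K] A))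
      (transposeH ((α⁻¹ : A ≃ₗ[K] A) : A →ₗ[K] A))) ψs

end Bialg

end Defs

universe u v

section Aux
variable {K : Type*} [Field K] {A : Type*} [AddCommGroup A] [Module K A]

@[simp] lemma rSharpL_tmul (x y : A) (ξ : A →ₗ[K] K) :
    rSharpL (x ⊗ₜ[K] y) ξ = ξ x • y := by
  simp [rSharpL]

@[simp] lemma pair12_tmul (ξ η : A →ₗ[K] K) (x y z : A) :
    pair12 ξ η (x ⊗ₜ[K] (y ⊗ₜ[K] z)) = ξ x • (η y • z) := by
  simp [pair12, smul_comm (η y) (ξ x)]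

end Aux

section Sep
variable {K : Type*} [Field K] {A : Type*} [AddCommGroup A] [Module K A]
variable [FiniteDimensional K A]

lemma pair12_coord (b : Basis (Fin (finrank K A)) K A) (t : A ⊗[K] (A ⊗[K] A))
    (i j k : Fin (finrank K A)) :
    ((b.tensorProduct (b.tensorProduct b)).repr t) (i, (j, k))
      = b.repr (pair12 (b.coord i) (b.coord j) t) k := by
  induction t using TensorProduct.induction_on with
  | zero => simp
  | add s t hs ht => simp [map_add, hs, ht]
  | tmul x yz =>
    induction yz using TensorProduct.induction_on with
    | zero => simp
    | add s t hs ht =>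
      simp only [TensorProduct.tmul_add, map_add, Finsupp.add_apply, hs, ht]
    | tmul y z =>
      simp [Basis.tensorProduct_repr_tmul_apply, Basis.coord_apply, smul_eq_mul]
      ring

lemma eq_zero_of_pair12 (t : A ⊗[K] (A ⊗[K] A))
    (ht : ∀ ξ η : A →ₗ[K] K, pair12 ξ η t = 0) : t = 0 := by
  let b := Module.finBasis K A
  have : ∀ p, ((b.tensorProduct (b.tensorProduct b)).repr t) p = 0 := by
    rintro ⟨i, j, k⟩
    rw [pair12_coord b t i j k, ht, map_zero]
    rfl
  have h0 : (b.tensorProduct (b.tensorProduct b)).repr t = 0 := Finsupp.ext this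
  simpa using congrArg ((b.tensorProduct (b.tensorProduct b)).repr.symm) h0

end Sep

section Expand
variable {K : Type*} [Field K] {A : Type*} [AddCommGroup A] [Module K A]

@[simp] lemma rSharpL_zero (ξ : A →ₗ[K] K) : rSharpL (0 : A ⊗[K] A) ξ = 0 := by
  simp [rSharpL]

@[simp] lemma rSharpL_add (r s : A ⊗[K] A) (ξ : A →ₗ[K] K) :
    rSharpL (r + s) ξ = rSharpL r ξ + rSharpL s ξ := by
  simp [rSharpL]

set_option maxHeartbeats 2000000 in
lemma pair12_BB (m : A →ₗ[K] A →ₗ[K] A) (α : A →ₗ[K] A) (r s : A ⊗[K] A)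
    (ξ η : A →ₗ[K] K) :
    pair12 ξ η (homPreLieBB m α (r ⊗ₜ[K] s)) =
      m (rSharpL r (ξ ∘ₗ α)) (rSharpL s (η ∘ₗ α))
      - α (rSharpL s (η ∘ₗ ((m - m.flip).flip (rSharpL r (ξ ∘ₗ α)))))
      - α (rSharpL r (ξ ∘ₗ (m.flip (rSharpL ((TensorProduct.comm K A A) s) (η ∘ₗ α))))) := by
  induction r using TensorProduct.induction_on with
  | zero => simp
  | add r1 r2 h1 h2 =>
    simp only [TensorProduct.add_tmul, map_add, rSharpL_add, h1, h2,
      LinearMap.add_apply, LinearMap.map_add, LinearMap.comp_add]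
    abel
  | tmul x y =>
    induction s using TensorProduct.induction_on with
    | zero => simp
    | add s1 s2 h1 h2 =>
      simp only [TensorProduct.tmul_add, map_add, rSharpL_add, h1, h2,
        LinearMap.add_apply, LinearMap.map_add, LinearMap.comp_add]
      abel
    | tmul x' y' =>
      simp only [homPreLieBB, rSharpL_tmul, TensorProduct.comm_tmul, LinearMap.sub_apply,
        LinearMap.coe_comp, Function.comp_apply, LinearEquiv.coe_coe,
        TensorProduct.tensorTensorTensorComm_tmul, TensorProduct.map_tmul,
        TensorProduct.assoc_tmul, TensorProduct.assoc_symm_tmul, TensorProduct.lift.tmul,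
        LinearMap.lTensor_tmul, map_sub, pair12_tmul, LinearMap.flip_apply,
        LinearMap.map_smul, LinearMap.smul_apply, map_smul, smul_eq_mul, mul_sub, sub_smul,
        smul_sub]
      module

end Expand

section Main
variable {K : Type*} [Field K] {A : Type*} [AddCommGroup A] [Module K A]

lemma zpow_neg2_apply (α : A ≃ₗ[K] A) (x : A) :
    ((α ^ (-2 : ℤ) : A ≃ₗ[K] A) : A →ₗ[K] A) x = α.symm (α.symm x) := by
  have : (α ^ (-2 : ℤ)) = α⁻¹ * α⁻¹ := by group
  rw [this]; rfl

@[simp] lemma apply_inv_apply (α : A ≃ₗ[K] A) (x : A) : α (α⁻¹ x) = x :=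
  α.apply_symm_apply x

@[simp] lemma apply_apply_sq_inv (α : A ≃ₗ[K] A) (x : A) : α (α ((α ^ 2)⁻¹ x)) = x := by
  have h : α (α ((α ^ 2)⁻¹ x)) = (α ^ 2) ((α ^ 2)⁻¹ x) := by rw [pow_two]; rfl
  rw [h]; exact (α ^ 2).apply_symm_apply x

@[simp] lemma apply_apply_zpow_inv (α : A ≃ₗ[K] A) (x : A) :
    α (α ((α ^ (2 : ℤ))⁻¹ x)) = x := by
  have h2 : (α ^ (2 : ℤ)) = α ^ (2 : ℕ) := by rw [zpow_two, pow_two]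
  rw [h2]; exact apply_apply_sq_inv α x

@[simp] lemma apply_apply_zpow_neg2 (α : A ≃ₗ[K] A) (x : A) :
    α (α ((α ^ (-2 : ℤ)) x)) = x := by
  rw [zpow_neg]; exact apply_apply_zpow_inv α x

lemma Lstar_apply' (m : A →ₗ[K] A →ₗ[K] A) (α : A ≃ₗ[K] A) (c : A) (ξ : A →ₗ[K] K) (y : A) :
    Lstar m α c ξ y = -ξ (m (((α⁻¹ : A ≃ₗ[K] A) : A →ₗ[K] A) c)
      (((α ^ (-2 : ℤ) : A ≃ₗ[K] A) : A →ₗ[K] A) y)) := rfl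

lemma Rstar_apply' (m : A →ₗ[K] A →ₗ[K] A) (α : A ≃ₗ[K] A) (c : A) (ξ : A →ₗ[K] K) (y : A) :
    Rstar m α c ξ y = -ξ (m (((α ^ (-2 : ℤ) : A ≃ₗ[K] A) : A →ₗ[K] A) y)
      (((α⁻¹ : A ≃ₗ[K] A) : A →ₗ[K] A) c)) := rfl

lemma adStar_apply' (m : A →ₗ[K] A →ₗ[K] A) (α : A ≃ₗ[K] A) (c : A) (ξ : A →ₗ[K] K) :
    adStar m α c ξ = Lstar m α c ξ - Rstar m α c ξ := rfl

lemma negRstar_apply' (m : A →ₗ[K] A →ₗ[K] A) (α : A ≃ₗ[K] A) (c : A) (ξ : A →ₗ[K] K) :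
    (@Neg.neg _ (@LinearMap.instNeg _ _ _ _ _ _ _ (LinearMap.addCommGroup : AddCommGroup ((A →ₗ[K] K) →ₗ[K] (A →ₗ[K] K))) _ _ _) (Rstar m α)) c ξ = -(Rstar m α c ξ) := rfl

lemma adStar_comp (m : A →ₗ[K] A →ₗ[K] A) (α : A ≃ₗ[K] A)
    (hm : ∀ x y, α (m x y) = m (α x) (α y)) (c : A) (η : A →ₗ[K] K) :
    adStar m α c (η ∘ₗ (α : A →ₗ[K] A) ∘ₗ (α : A →ₗ[K] A))
      = η ∘ₗ ((m - m.flip).flip (α c)) := by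
  ext y
  rw [adStar_apply', LinearMap.sub_apply, Lstar_apply', Rstar_apply', zpow_neg2_apply]
  simp [adStar, Lstar, Rstar, transposeH, zpow_neg2_apply, hm]
  abel

lemma negRstar_comp (m : A →ₗ[K] A →ₗ[K] A) (α : A ≃ₗ[K] A)
    (hm : ∀ x y, α (m x y) = m (α x) (α y)) (d : A) (ξ : A →ₗ[K] K) :
    (@Neg.neg _ (@LinearMap.instNeg _ _ _ _ _ _ _ (LinearMap.addCommGroup : AddCommGroup ((A →ₗ[K] K) →ₗ[K] (A →ₗ[K] K))) _ _ _) (Rstar m α)) d (ξ ∘ₗ (α : A →ₗ[K] A) ∘ₗ (α : A →ₗ[K] A))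
      = ξ ∘ₗ (m.flip (α d)) := by
  ext y
  rw [negRstar_apply', LinearMap.neg_apply, Rstar_apply', zpow_neg2_apply]
  simp [Rstar, transposeH, zpow_neg2_apply, hm]

end Main

section Key
variable {K : Type*} [Field K] {A : Type*} [AddCommGroup A] [Module K A]

lemma comp_cancel (α : A ≃ₗ[K] A) (ζ : A →ₗ[K] K) :
    (ζ ∘ₗ (α : A →ₗ[K] A)) ∘ₗ ((α⁻¹ : A ≃ₗ[K] A) : A →ₗ[K] A) = ζ := by
  ext x; simp

lemma transposeH_eq (f : A →ₗ[K] A) (ζ : A →ₗ[K] K) : transposeH f ζ = ζ ∘ₗ f := rfl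

lemma key_identity (m : A →ₗ[K] A →ₗ[K] A) (α : A ≃ₗ[K] A)
    (hm : ∀ x y, (α : A →ₗ[K] A) (m x y) = m (α x) (α y))
    (r : A ⊗[K] A) (hsym : (TensorProduct.comm K A A) r = r)
    (h1 : ∀ ξ : (A →ₗ[K] K),
      rSharpL r (ξ ∘ₗ ((α⁻¹ : A ≃ₗ[K] A) : A →ₗ[K] A)) = α (rSharpL r ξ))
    (ξ η : A →ₗ[K] K) :
    pair12 ξ η (bracket2 m (α : A →ₗ[K] A) r) =
      (fun T => m (T ((ξ ∘ₗ (α : A →ₗ[K] A)) ∘ₗ (α : A →ₗ[K] A)))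
          (T ((η ∘ₗ (α : A →ₗ[K] A)) ∘ₗ (α : A →ₗ[K] A)))
        - T (adStar m α
              (T ((α.symm.dualMap : (A →ₗ[K] K) ≃ₗ[K] (A →ₗ[K] K)).symm
                ((ξ ∘ₗ (α : A →ₗ[K] A)) ∘ₗ (α : A →ₗ[K] A))))
              ((η ∘ₗ (α : A →ₗ[K] A)) ∘ₗ (α : A →ₗ[K] A))
            + (@Neg.neg _ (@LinearMap.instNeg _ _ _ _ _ _ _ (LinearMap.addCommGroup : AddCommGroup ((A →ₗ[K] K) →ₗ[K] (A →ₗ[K] K))) _ _ _) (Rstar m α))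
              (T ((α.symm.dualMap : (A →ₗ[K] K) ≃ₗ[K] (A →ₗ[K] K)).symm
                ((η ∘ₗ (α : A →ₗ[K] A)) ∘ₗ (α : A →ₗ[K] A))))
              ((ξ ∘ₗ (α : A →ₗ[K] A)) ∘ₗ (α : A →ₗ[K] A))))
        ((rSharpL r) ∘ₗ (transposeH ((α⁻¹ : A ≃ₗ[K] A) : A →ₗ[K] A))) := by
  set αl : A →ₗ[K] A := (α : A →ₗ[K] A) with hαl
  set αi : A →ₗ[K] A := ((α⁻¹ : A ≃ₗ[K] A) : A →ₗ[K] A) with hαi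
  set u : A →ₗ[K] K := (ξ ∘ₗ αl) ∘ₗ αl with hu
  set v : A →ₗ[K] K := (η ∘ₗ αl) ∘ₗ αl with hv
  have hcomp : ∀ ζ : A →ₗ[K] K, (ζ ∘ₗ αl) ∘ₗ αi = ζ := fun ζ => comp_cancel α ζ
  have hβu : (α.symm.dualMap : (A →ₗ[K] K) ≃ₗ[K] (A →ₗ[K] K)).symm u = u ∘ₗ αl := rfl
  have hβv : (α.symm.dualMap : (A →ₗ[K] K) ≃ₗ[K] (A →ₗ[K] K)).symm v = v ∘ₗ αl := rfl
  simp only [hβu, hβv]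
  simp only [LinearMap.coe_comp, Function.comp_apply, transposeH_eq]
  rw [hcomp u, hcomp v, hcomp (ξ ∘ₗ αl), hcomp (η ∘ₗ αl)]
  -- adStar / Rstar arguments: note u = (ξ ∘ₗ αl) ∘ₗ αl  and adStar_comp expects η ∘ₗ αl ∘ₗ αl
  have hass : ∀ ζ : A →ₗ[K] K, (ζ ∘ₗ αl) ∘ₗ αl = ζ ∘ₗ (αl ∘ₗ αl) := fun ζ =>
    (LinearMap.comp_assoc _ _ _)
  have hau : rSharpL r (ξ ∘ₗ αl) = α (rSharpL r u) := by
    have e : u ∘ₗ αi = ξ ∘ₗ αl := hcomp (ξ ∘ₗ αl)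
    rw [← e]; exact h1 u
  have hav : rSharpL r (η ∘ₗ αl) = α (rSharpL r v) := by
    have e : v ∘ₗ αi = η ∘ₗ αl := hcomp (η ∘ₗ αl)
    rw [← e]; exact h1 v
  rw [hu, hv, hass, hass, adStar_comp m α hm, negRstar_comp m α hm, ← hass ξ, ← hass η,
    ← hu, ← hv, ← hau, ← hav]
  rw [LinearMap.add_comp, map_add, h1, h1]
  simp only [bracket2]
  rw [pair12_BB m αl r r ξ η, hsym]
  abel

end Key

section Thm
variable {K : Type*} [Field K] {A : Type*} [AddCommGroup A] [Module K A]

lemma comp_cancel' (α : A ≃ₗ[K] A) (ζ : A →ₗ[K] K) :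
    (ζ ∘ₗ ((α⁻¹ : A ≃ₗ[K] A) : A →ₗ[K] A)) ∘ₗ (α : A →ₗ[K] A) = ζ := by
  ext x
  exact congrArg ζ (α.symm_apply_apply x)

end Thm

theorem stmt_10 {K : Type*} [Field K] {A : Type*} [AddCommGroup A] [Module K A]
    [FiniteDimensional K A]
    (m : A →ₗ[K] A →ₗ[K] A) (α : A ≃ₗ[K] A)
    (h : IsHomPreLie m (α : A →ₗ[K] A))
    (r : A ⊗[K] A)
    (hsym : (TensorProduct.comm K A A) r = r) :
    ((∀ ξ : (A →ₗ[K] K), rSharpL r (ξ ∘ₗ ((α⁻¹ : A ≃ₗ[K] A) : A →ₗ[K] A)) = α (rSharpL r ξ))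
        ∧ bracket2 m (α : A →ₗ[K] A) r = 0)
      ↔ IsHomOOperator m (α : A →ₗ[K] A)
          (α.symm.dualMap : (A →ₗ[K] K) ≃ₗ[K] (A →ₗ[K] K))
          (adStar m α) (@Neg.neg _ (@LinearMap.instNeg _ _ _ _ _ _ _ (LinearMap.addCommGroup : AddCommGroup ((A →ₗ[K] K) →ₗ[K] (A →ₗ[K] K))) _ _ _) (Rstar m α))
          ((rSharpL r) ∘ₗ (transposeH ((α⁻¹ : A ≃ₗ[K] A) : A →ₗ[K] A))) := by
  have hm := h.1
  set αl : A →ₗ[K] A := (α : A →ₗ[K] A) with hαl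
  set αi : A →ₗ[K] A := ((α⁻¹ : A ≃ₗ[K] A) : A →ₗ[K] A) with hαi
  constructor
  · rintro ⟨h1, h2⟩
    refine ⟨fun ζ => h1 (ζ ∘ₗ αi), fun u v => ?_⟩
    have k := key_identity m α hm r hsym h1 ((u ∘ₗ αi) ∘ₗ αi) ((v ∘ₗ αi) ∘ₗ αi)
    simp only [comp_cancel' α, hαi] at k
    rw [h2, map_zero] at k
    exact eq_of_sub_eq_zero k.symm
  · rintro ⟨hb, ho⟩
    have h1 : ∀ ξ : (A →ₗ[K] K), rSharpL r (ξ ∘ₗ αi) = α (rSharpL r ξ) := by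
      intro ξ
      have this' : rSharpL r (((ξ ∘ₗ αl) ∘ₗ αi) ∘ₗ αi)
          = α (rSharpL r ((ξ ∘ₗ αl) ∘ₗ αi)) := hb (ξ ∘ₗ αl)
      rwa [comp_cancel α ξ] at this'
    refine ⟨h1, ?_⟩
    apply eq_zero_of_pair12
    intro ξ η
    rw [key_identity m α hm r hsym h1 ξ η]
    exact sub_eq_zero_of_eq (ho _ _)
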